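/- Let β₀, β₁, κ > 0, let s ≥ 1 be an integer, and for t > 0 let γ_t := κ ∇ w_t where w_t = −((β₀+β₁)/κ) Δ v_t and v_t(x) = t³ V(x/t) + g(x), with V(y₁,y₂) = y₁ e^{−y₁} cos(y₂) and g(x₁,x₂) = sin(πx₁) sin(πx₂). Then there exist constants c > 0, C > 0 and t₀ ∈ (0, 1] such that for all t ∈ (0, t₀): c · t^{1/2 − s} ≤ ( Σ_{a+b=s} Σ_{i=1,2} ∫_{(0,1)²} |∂₁^a ∂₂^b (γ_t)_i(x)|² dx )^{1/2} ≤ C · t^{1/2 − s}. In other words, the H^s seminorm of the shear strain γ_t on the unit square behaves like t^{−s+1/2} as t → 0⁺. -/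

import Mathlib

noncomputable section

open Real MeasureTheory

/-- First partial derivative `∂₁` of a function on `ℝ²`. -/
def pd1 (f : ℝ × ℝ → ℝ) : ℝ × ℝ → ℝ := fun p => deriv (fun s => f (s, p.2)) p.1

/-- Second partial derivative `∂₂` of a function on `ℝ²`. -/
def pd2 (f : ℝ × ℝ → ℝ) : ℝ × ℝ → ℝ := fun p => deriv (fun s => f (p.1, s)) p.2

/-- Laplacian `Δ = ∂₁² + ∂₂²` on `ℝ²`. -/
def lap (f : ℝ × ℝ → ℝ) : ℝ × ℝ → ℝ := fun p => pd1 (pd1 f) p + pd2 (pd2 f) p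

/-- `V(y₁, y₂) = y₁ e^{−y₁} cos(y₂)`. -/
def V : ℝ × ℝ → ℝ := fun y => y.1 * Real.exp (-y.1) * Real.cos y.2

/-- `g(x₁, x₂) = sin(π x₁) sin(π x₂)`. -/
def g : ℝ × ℝ → ℝ := fun x => Real.sin (π * x.1) * Real.sin (π * x.2)

/-- `v_t(x) = t³ V(x/t) + g(x)`. -/
def vt (t : ℝ) : ℝ × ℝ → ℝ := fun x => t ^ 3 * V (x.1 / t, x.2 / t) + g x

/-- `w_t = −((β₀ + β₁)/κ) Δ v_t`. -/
def wt (β₀ β₁ κ t : ℝ) : ℝ × ℝ → ℝ := fun x => -((β₀ + β₁) / κ) * lap (vt t) x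

/-- First component of the shear strain `γ_t = κ ∇ w_t`. -/
def gam1 (β₀ β₁ κ t : ℝ) : ℝ × ℝ → ℝ := fun x => κ * pd1 (wt β₀ β₁ κ t) x

/-- Second component of the shear strain `γ_t = κ ∇ w_t`. -/
def gam2 (β₀ β₁ κ t : ℝ) : ℝ × ℝ → ℝ := fun x => κ * pd2 (wt β₀ β₁ κ t) x

/-- The open unit square `(0,1)² ⊂ ℝ²`. -/
def usq : Set (ℝ × ℝ) := Set.Ioo (0 : ℝ) 1 ×ˢ Set.Ioo (0 : ℝ) 1

/-!
Since `Δv_t = -2t e^{-x₁/t} cos(x₂/t) - 2π² g`, the strain `γ_t` is a boundary layer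
`e^{-x₁/t} cos(x₂/t)` of amplitude `2(β₀+β₁)` plus the smooth mode `cos(πx₁) sin(πx₂)`.
Both lie in the family `layerMode`, which each `∂ᵢ` maps to itself, multiplying the layer
amplitude by `-1/t` and the mode amplitude by `-π`. A derivative of order `s` thus has a layer of
amplitude `≍ t^{-s}` and width `t`, whose squared `L²` norm is `≍ t^{1-2s}`, while the smooth part
stays bounded. For the lower bound take the pure `∂₁^s` derivatives of both components: their
layers have phases differing by `π/2`, so `cos² + sin² = 1` removes the oscillation in `x₂`.
-/

open Set

def layerMode (A B μ ω φ ψ χ : ℝ) : ℝ × ℝ → ℝ :=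
  fun x => A * exp (-(μ * x.1)) * cos (μ * x.2 + φ) + B * cos (ω * x.1 + ψ) * cos (ω * x.2 + χ)

section layerMode

variable (A B μ ω φ ψ χ : ℝ)

lemma continuous_layerMode : Continuous (layerMode A B μ ω φ ψ χ) := by
  unfold layerMode; fun_prop

lemma mul_layerMode (c : ℝ) :
    (fun x => c * layerMode A B μ ω φ ψ χ x) = layerMode (c * A) (c * B) μ ω φ ψ χ := by
  funext x; simp only [layerMode]; ring

lemma pd1_layerMode :
    pd1 (layerMode A B μ ω φ ψ χ) = layerMode (-μ * A) (-ω * B) μ ω φ (ψ - π / 2) χ := by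
  funext p
  simp (disch := fun_prop) only [pd1, layerMode, deriv_fun_add, deriv_fun_mul, deriv_const',
    _root_.deriv_exp, _root_.deriv_cos, deriv.fun_neg', deriv_const_mul_id',
    add_sub_assoc', cos_sub_pi_div_two]
  ring

lemma pd2_layerMode :
    pd2 (layerMode A B μ ω φ ψ χ) = layerMode (-μ * A) (-ω * B) μ ω (φ - π / 2) ψ (χ - π / 2) := by
  funext p
  simp (disch := fun_prop) only [pd2, layerMode, deriv_fun_add, deriv_fun_mul, deriv_const',
    _root_.deriv_cos, deriv_const_mul_id', add_sub_assoc', cos_sub_pi_div_two]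
  ring

lemma iterate_pd1_layerMode (a : ℕ) :
    pd1^[a] (layerMode A B μ ω φ ψ χ) =
      layerMode ((-μ) ^ a * A) ((-ω) ^ a * B) μ ω φ (ψ - a * (π / 2)) χ := by
  induction a generalizing A B ψ with
  | zero => simp
  | succ n ih =>
    rw [Function.iterate_succ_apply, pd1_layerMode, ih]
    congr 1 <;> push_cast <;> ring

lemma iterate_pd2_layerMode (b : ℕ) :
    pd2^[b] (layerMode A B μ ω φ ψ χ) =
      layerMode ((-μ) ^ b * A) ((-ω) ^ b * B) μ ω (φ - b * (π / 2)) ψ (χ - b * (π / 2)) := by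
  induction b generalizing A B φ χ with
  | zero => simp
  | succ n ih =>
    rw [Function.iterate_succ_apply, pd2_layerMode, ih]
    congr 1 <;> push_cast <;> ring

lemma iterate_pd1_iterate_pd2_layerMode (a b : ℕ) :
    pd1^[a] (pd2^[b] (layerMode A B μ ω φ ψ χ)) =
      layerMode ((-μ) ^ (a + b) * A) ((-ω) ^ (a + b) * B) μ ω
        (φ - b * (π / 2)) (ψ - a * (π / 2)) (χ - b * (π / 2)) := by
  rw [iterate_pd2_layerMode, iterate_pd1_layerMode, pow_add, pow_add]
  congr 1 <;> ring

end layerMode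

section strain

variable (β₀ β₁ κ t : ℝ)

lemma lap_vt (ht : t ≠ 0) :
    lap (vt t) = layerMode (-2 * t) (-2 * π ^ 2) t⁻¹ π 0 (-(π / 2)) (-(π / 2)) := by
  funext p
  simp (disch := fun_prop) only [lap, pd1, pd2, vt, V, g, layerMode, deriv_fun_add, deriv_fun_mul,
    deriv_fun_pow, deriv_const', deriv_div_const, deriv_id'', _root_.deriv_exp, deriv.fun_neg',
    _root_.deriv_cos, _root_.deriv_sin, deriv_const_mul_id', add_zero, ← sub_eq_add_neg,
    cos_sub_pi_div_two]
  field_simp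
  ring

lemma wt_eq (ht : t ≠ 0) :
    wt β₀ β₁ κ t = layerMode (2 * (β₀ + β₁) * t / κ) (2 * (β₀ + β₁) * π ^ 2 / κ) t⁻¹ π
      0 (-(π / 2)) (-(π / 2)) := by
  unfold wt; rw [lap_vt t ht, mul_layerMode]
  congr 1 <;> ring

lemma gam1_eq (hκ : κ ≠ 0) (ht : t ≠ 0) :
    gam1 β₀ β₁ κ t = layerMode (-2 * (β₀ + β₁)) (-2 * (β₀ + β₁) * π ^ 3) t⁻¹ π
      0 (-(π / 2) - π / 2) (-(π / 2)) := by
  unfold gam1; rw [wt_eq β₀ β₁ κ t ht, pd1_layerMode, mul_layerMode]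
  congr 1 <;> field_simp

lemma gam2_eq (hκ : κ ≠ 0) (ht : t ≠ 0) :
    gam2 β₀ β₁ κ t = layerMode (-2 * (β₀ + β₁)) (-2 * (β₀ + β₁) * π ^ 3) t⁻¹ π
      (0 - π / 2) (-(π / 2)) (-(π / 2) - π / 2) := by
  unfold gam2; rw [wt_eq β₀ β₁ κ t ht, pd2_layerMode, mul_layerMode]
  congr 1 <;> field_simp

end strain

lemma measurableSet_usq : MeasurableSet usq := measurableSet_Ioo.prod measurableSet_Ioo

lemma integrableOn_usq {f : ℝ × ℝ → ℝ} (hf : Continuous f) : IntegrableOn f usq :=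
  (hf.continuousOn.integrableOn_compact (isCompact_Icc.prod isCompact_Icc)).mono_set
    (prod_mono Ioo_subset_Icc_self Ioo_subset_Icc_self)

lemma setIntegral_usq_fst (f : ℝ → ℝ) : ∫ x in usq, f x.1 = ∫ y in Ioo (0 : ℝ) 1, f y := by
  rw [usq, Measure.volume_eq_prod, ← Measure.prod_restrict, integral_fun_fst]
  simp [Measure.real, Real.volume_Ioo]

lemma setIntegral_Ioo_exp_neg_mul {μ : ℝ} (hμ : μ ≠ 0) :
    ∫ y in Ioo (0 : ℝ) 1, exp (-(μ * y)) = (1 - exp (-μ)) / μ := by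
  rw [← integral_Ioc_eq_integral_Ioo, ← intervalIntegral.integral_of_le zero_le_one]
  simp only [← neg_mul]
  rw [intervalIntegral.integral_comp_mul_left (fun y => exp y) (neg_ne_zero.mpr hμ), integral_exp]
  simp only [mul_zero, mul_one, exp_zero, smul_eq_mul]
  field_simp
  ring

lemma setIntegral_usq_exp_add_const (c d : ℝ) {μ : ℝ} (hμ : μ ≠ 0) :
    ∫ x in usq, (c * exp (-(μ * x.1)) + d) = c * ((1 - exp (-μ)) / μ) + d := by
  rw [setIntegral_usq_fst (fun y => c * exp (-(μ * y)) + d), integral_add, integral_const_mul,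
    setIntegral_Ioo_exp_neg_mul hμ]
  · simp [Measure.real, Real.volume_Ioo]
  · have h : IntegrableOn (fun y : ℝ => c * exp (-(μ * y))) (Icc 0 1) :=
      Continuous.integrableOn_Icc (by fun_prop)
    exact h.mono_set Ioo_subset_Icc_self
  · exact integrableOn_const (by simp [Real.volume_Ioo])

lemma sq_mul_cos_mul_cos_le (B a b : ℝ) : (B * cos a * cos b) ^ 2 ≤ B ^ 2 := by
  have h : cos a ^ 2 * cos b ^ 2 ≤ 1 :=
    mul_le_one₀ (cos_sq_le_one a) (sq_nonneg _) (cos_sq_le_one b)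
  calc (B * cos a * cos b) ^ 2 = B ^ 2 * (cos a ^ 2 * cos b ^ 2) := by ring
    _ ≤ B ^ 2 * 1 := by gcongr
    _ = B ^ 2 := mul_one _

lemma sq_mul_exp_neg_mul (A μ y θ : ℝ) :
    (A * exp (-(μ * y)) * θ) ^ 2 = A ^ 2 * exp (-(2 * μ * y)) * θ ^ 2 := by
  rw [show -(2 * μ * y) = -(μ * y) + -(μ * y) by ring, exp_add]
  ring

section layerModeEstimates

variable (A B μ ω φ ψ χ : ℝ)

lemma sq_layerMode_le (x : ℝ × ℝ) :
    layerMode A B μ ω φ ψ χ x ^ 2 ≤ 2 * A ^ 2 * exp (-(2 * μ * x.1)) + 2 * B ^ 2 := by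
  have hlayer : (A * exp (-(μ * x.1)) * cos (μ * x.2 + φ)) ^ 2 ≤ A ^ 2 * exp (-(2 * μ * x.1)) := by
    rw [sq_mul_exp_neg_mul]
    exact mul_le_of_le_one_right (by positivity) (cos_sq_le_one _)
  have hmode := sq_mul_cos_mul_cos_le B (ω * x.1 + ψ) (ω * x.2 + χ)
  simp only [layerMode]
  linarith [add_sq_le (a := A * exp (-(μ * x.1)) * cos (μ * x.2 + φ))
    (b := B * cos (ω * x.1 + ψ) * cos (ω * x.2 + χ))]

lemma sq_add_sq_layerMode_ge (B' ψ' χ' : ℝ) (x : ℝ × ℝ) :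
    A ^ 2 / 2 * exp (-(2 * μ * x.1)) - (B ^ 2 + B' ^ 2) ≤
      layerMode A B μ ω φ ψ χ x ^ 2 + layerMode A B' μ ω (φ - π / 2) ψ' χ' x ^ 2 := by
  have key (u q : ℝ) : u ^ 2 / 2 - q ^ 2 ≤ (u + q) ^ 2 := by nlinarith [sq_nonneg (u + 2 * q)]
  simp only [layerMode]
  set u₁ := A * exp (-(μ * x.1)) * cos (μ * x.2 + φ) with hu₁
  set u₂ := A * exp (-(μ * x.1)) * cos (μ * x.2 + (φ - π / 2)) with hu₂
  have hpyth : u₁ ^ 2 + u₂ ^ 2 = A ^ 2 * exp (-(2 * μ * x.1)) := by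
    rw [hu₁, hu₂, sq_mul_exp_neg_mul, sq_mul_exp_neg_mul, add_sub_assoc', cos_sub_pi_div_two,
      ← mul_add, cos_sq_add_sin_sq, mul_one]
  linarith [key u₁ (B * cos (ω * x.1 + ψ) * cos (ω * x.2 + χ)),
    key u₂ (B' * cos (ω * x.1 + ψ') * cos (ω * x.2 + χ')),
    sq_mul_cos_mul_cos_le B (ω * x.1 + ψ) (ω * x.2 + χ),
    sq_mul_cos_mul_cos_le B' (ω * x.1 + ψ') (ω * x.2 + χ')]

lemma integral_sq_layerMode_le (hμ : 0 < μ) :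
    ∫ x in usq, layerMode A B μ ω φ ψ χ x ^ 2 ≤ A ^ 2 / μ + 2 * B ^ 2 := by
  calc ∫ x in usq, layerMode A B μ ω φ ψ χ x ^ 2
      ≤ ∫ x in usq, (2 * A ^ 2 * exp (-(2 * μ * x.1)) + 2 * B ^ 2) :=
        setIntegral_mono_on (integrableOn_usq ((continuous_layerMode ..).pow 2))
          (integrableOn_usq (by fun_prop)) measurableSet_usq
          fun x _ => sq_layerMode_le A B μ ω φ ψ χ x
    _ = 2 * A ^ 2 * ((1 - exp (-(2 * μ))) / (2 * μ)) + 2 * B ^ 2 :=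
        setIntegral_usq_exp_add_const _ _ (by positivity)
    _ ≤ A ^ 2 / μ + 2 * B ^ 2 := by
        rw [show A ^ 2 / μ = 2 * A ^ 2 * (1 / (2 * μ)) by field_simp]
        gcongr
        linarith [exp_pos (-(2 * μ))]

lemma integral_sq_add_integral_sq_layerMode_ge (B' ψ' χ' : ℝ) (hμ : 0 < μ) :
    A ^ 2 * (1 - exp (-(2 * μ))) / (4 * μ) - (B ^ 2 + B' ^ 2) ≤
      (∫ x in usq, layerMode A B μ ω φ ψ χ x ^ 2) +
        ∫ x in usq, layerMode A B' μ ω (φ - π / 2) ψ' χ' x ^ 2 := by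
  have hint (A B φ ψ χ : ℝ) : IntegrableOn (fun x => layerMode A B μ ω φ ψ χ x ^ 2) usq :=
    integrableOn_usq ((continuous_layerMode ..).pow 2)
  rw [← integral_add (hint ..) (hint ..)]
  calc A ^ 2 * (1 - exp (-(2 * μ))) / (4 * μ) - (B ^ 2 + B' ^ 2)
      = ∫ x in usq, (A ^ 2 / 2 * exp (-(2 * μ * x.1)) + -(B ^ 2 + B' ^ 2)) := by
        rw [setIntegral_usq_exp_add_const _ _ (by positivity)]
        field_simp
        ring
    _ ≤ _ := setIntegral_mono_on (integrableOn_usq (by fun_prop)) ((hint ..).add (hint ..))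
          measurableSet_usq fun x _ => by
        simpa only [Pi.add_apply, ← sub_eq_add_neg] using
          sq_add_sq_layerMode_ge A B μ ω φ ψ χ B' ψ' χ' x

end layerModeEstimates

lemma sq_neg_pow_mul (μ A : ℝ) (n : ℕ) : ((-μ) ^ n * A) ^ 2 = (μ ^ 2) ^ n * A ^ 2 := by
  rw [mul_pow, ← pow_mul, mul_comm n 2, pow_mul, neg_sq]

lemma integral_sq_iterate_layerMode_le (A B μ ω φ ψ χ : ℝ) (a b : ℕ) (hμ : 0 < μ) :
    ∫ x in usq, (pd1^[a] (pd2^[b] (layerMode A B μ ω φ ψ χ)) x) ^ 2 ≤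
      (μ ^ 2) ^ (a + b) * A ^ 2 / μ + 2 * ((ω ^ 2) ^ (a + b) * B ^ 2) := by
  rw [iterate_pd1_iterate_pd2_layerMode, ← sq_neg_pow_mul, ← sq_neg_pow_mul]
  exact integral_sq_layerMode_le _ _ _ _ _ _ _ hμ

def shearSeminormSq (β₀ β₁ κ : ℝ) (s : ℕ) (t : ℝ) : ℝ :=
  ∑ a ∈ Finset.range (s + 1),
    ((∫ x in usq, (pd1^[a] (pd2^[s - a] (gam1 β₀ β₁ κ t)) x) ^ 2)
      + (∫ x in usq, (pd1^[a] (pd2^[s - a] (gam2 β₀ β₁ κ t)) x) ^ 2))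

section shearSeminormSq

variable (β₀ β₁ κ : ℝ) (s : ℕ) {t : ℝ}

lemma shearSeminormSq_le (hκ : κ ≠ 0) (ht : 0 < t) :
    shearSeminormSq β₀ β₁ κ s t ≤
      2 * (s + 1) * (4 * (β₀ + β₁) ^ 2 * ((t⁻¹ ^ 2) ^ s / t⁻¹)
        + 8 * (β₀ + β₁) ^ 2 * (π ^ 6 * (π ^ 2) ^ s)) := by
  have hμ : 0 < t⁻¹ := inv_pos.mpr ht
  have hterm : ∀ a ∈ Finset.range (s + 1),
      (∫ x in usq, (pd1^[a] (pd2^[s - a] (gam1 β₀ β₁ κ t)) x) ^ 2)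
        + (∫ x in usq, (pd1^[a] (pd2^[s - a] (gam2 β₀ β₁ κ t)) x) ^ 2) ≤
      2 * (4 * (β₀ + β₁) ^ 2 * ((t⁻¹ ^ 2) ^ s / t⁻¹)
        + 8 * (β₀ + β₁) ^ 2 * (π ^ 6 * (π ^ 2) ^ s)) := by
    intro a ha
    have has : a + (s - a) = s := Nat.add_sub_cancel' (Finset.mem_range_succ_iff.mp ha)
    rw [gam1_eq β₀ β₁ κ t hκ ht.ne', gam2_eq β₀ β₁ κ t hκ ht.ne']
    refine (add_le_add (integral_sq_iterate_layerMode_le _ _ _ _ _ _ _ _ _ hμ)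
      (integral_sq_iterate_layerMode_le _ _ _ _ _ _ _ _ _ hμ)).trans_eq ?_
    rw [has]
    ring
  refine (Finset.sum_le_card_nsmul _ _ _ hterm).trans_eq ?_
  rw [Finset.card_range, nsmul_eq_mul]
  push_cast
  ring

lemma le_shearSeminormSq (hκ : κ ≠ 0) (ht : 0 < t) :
    (β₀ + β₁) ^ 2 * (1 - exp (-(2 * t⁻¹))) * ((t⁻¹ ^ 2) ^ s / t⁻¹)
      - 8 * (β₀ + β₁) ^ 2 * (π ^ 6 * (π ^ 2) ^ s) ≤ shearSeminormSq β₀ β₁ κ s t := by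
  have hnonneg : ∀ a ∈ Finset.range (s + 1),
      0 ≤ (∫ x in usq, (pd1^[a] (pd2^[s - a] (gam1 β₀ β₁ κ t)) x) ^ 2)
        + (∫ x in usq, (pd1^[a] (pd2^[s - a] (gam2 β₀ β₁ κ t)) x) ^ 2) := fun _ _ =>
    add_nonneg (integral_nonneg fun _ => sq_nonneg _) (integral_nonneg fun _ => sq_nonneg _)
  refine le_trans ?_ (Finset.single_le_sum hnonneg (Finset.self_mem_range_succ s))
  simp only [Nat.sub_self, Function.iterate_zero, id_eq]
  rw [gam1_eq β₀ β₁ κ t hκ ht.ne', gam2_eq β₀ β₁ κ t hκ ht.ne', iterate_pd1_layerMode,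
    iterate_pd1_layerMode]
  refine le_trans (le_of_eq ?_) (integral_sq_add_integral_sq_layerMode_ge _ _ _ _ _ _ _ _ _ _
    (inv_pos.mpr ht))
  rw [sq_neg_pow_mul, sq_neg_pow_mul]
  field_simp
  ring

end shearSeminormSq

lemma inv_le_inv_sq_pow_div_inv {t : ℝ} (ht0 : 0 < t) (ht1 : t ≤ 1) {s : ℕ} (hs : 1 ≤ s) :
    t⁻¹ ≤ (t⁻¹ ^ 2) ^ s / t⁻¹ := by
  have h1 : 1 ≤ t⁻¹ := one_le_inv₀ ht0 |>.mpr ht1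
  rw [le_div_iff₀ (by positivity), ← sq]
  exact le_self_pow₀ (one_le_pow₀ h1) (by omega)

lemma inv_sq_pow_div_inv_eq_sq_rpow {t : ℝ} (ht : 0 < t) (s : ℕ) :
    (t⁻¹ ^ 2) ^ s / t⁻¹ = (t ^ ((1 : ℝ) / 2 - s)) ^ 2 := by
  rw [← Real.rpow_natCast (t ^ _) 2, ← Real.rpow_mul ht.le,
    show ((1 : ℝ) / 2 - s) * (2 : ℕ) = 1 - (2 * s : ℕ) by push_cast; ring, Real.rpow_sub ht,
    Real.rpow_one, Real.rpow_natCast, ← pow_mul, inv_pow]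
  field_simp

lemma exp_neg_two_mul_le_half {μ : ℝ} (hμ : 1 ≤ μ) : exp (-(2 * μ)) ≤ 1 / 2 := by
  rw [exp_neg, inv_le_comm₀ (exp_pos _) (by norm_num)]
  linarith [add_one_le_exp (2 * μ)]

lemma one_le_pi_pow_six_mul (s : ℕ) : 1 ≤ π ^ 6 * (π ^ 2) ^ s := by
  have hπ : 1 ≤ π := by linarith [pi_gt_three]
  exact one_le_mul_of_one_le_of_one_le (one_le_pow₀ hπ) (one_le_pow₀ (one_le_pow₀ hπ))

section shearSeminormSqAsymptotics

variable (β₀ β₁ κ : ℝ) {s : ℕ} {t : ℝ}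

lemma shearSeminormSq_le_of_le_one (hκ : κ ≠ 0) (ht0 : 0 < t) (ht1 : t ≤ 1) (hs : 1 ≤ s) :
    shearSeminormSq β₀ β₁ κ s t ≤
      8 * (s + 1) * (β₀ + β₁) ^ 2 * (1 + 2 * (π ^ 6 * (π ^ 2) ^ s)) * ((t⁻¹ ^ 2) ^ s / t⁻¹) := by
  have hX : 1 ≤ (t⁻¹ ^ 2) ^ s / t⁻¹ :=
    (one_le_inv₀ ht0 |>.mpr ht1).trans (inv_le_inv_sq_pow_div_inv ht0 ht1 hs)
  calc shearSeminormSq β₀ β₁ κ s t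
      ≤ 2 * (s + 1) * (4 * (β₀ + β₁) ^ 2 * ((t⁻¹ ^ 2) ^ s / t⁻¹)
          + 8 * (β₀ + β₁) ^ 2 * (π ^ 6 * (π ^ 2) ^ s)) := shearSeminormSq_le β₀ β₁ κ s hκ ht0
    _ ≤ 2 * (s + 1) * (4 * (β₀ + β₁) ^ 2 * ((t⁻¹ ^ 2) ^ s / t⁻¹)
          + 8 * (β₀ + β₁) ^ 2 * (π ^ 6 * (π ^ 2) ^ s) * ((t⁻¹ ^ 2) ^ s / t⁻¹)) := by
        gcongr _ * (_ + ?_)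
        exact le_mul_of_one_le_right (by positivity) hX
    _ = _ := by ring

lemma le_shearSeminormSq_of_lt (hκ : κ ≠ 0) (ht0 : 0 < t)
    (ht : t < 1 / (32 * (π ^ 6 * (π ^ 2) ^ s))) (hs : 1 ≤ s) :
    (β₀ + β₁) ^ 2 / 4 * ((t⁻¹ ^ 2) ^ s / t⁻¹) ≤ shearSeminormSq β₀ β₁ κ s t := by
  have hQ := one_le_pi_pow_six_mul s
  have ht1 : t ≤ 1 := ht.le.trans (by rw [div_le_one (by positivity)]; linarith)
  have hX : 32 * (π ^ 6 * (π ^ 2) ^ s) ≤ (t⁻¹ ^ 2) ^ s / t⁻¹ := by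
    refine le_trans ?_ (inv_le_inv_sq_pow_div_inv ht0 ht1 hs)
    rw [← one_div]
    exact ((lt_one_div ht0 (by positivity)).mp ht).le
  have hexp := exp_neg_two_mul_le_half (one_le_inv₀ ht0 |>.mpr ht1)
  calc (β₀ + β₁) ^ 2 / 4 * ((t⁻¹ ^ 2) ^ s / t⁻¹)
      ≤ (β₀ + β₁) ^ 2 * (1 / 2) * ((t⁻¹ ^ 2) ^ s / t⁻¹)
          - 8 * (β₀ + β₁) ^ 2 * (π ^ 6 * (π ^ 2) ^ s) := by
        nlinarith [mul_le_mul_of_nonneg_left hX (sq_nonneg (β₀ + β₁))]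
    _ ≤ (β₀ + β₁) ^ 2 * (1 - exp (-(2 * t⁻¹))) * ((t⁻¹ ^ 2) ^ s / t⁻¹)
          - 8 * (β₀ + β₁) ^ 2 * (π ^ 6 * (π ^ 2) ^ s) := by
        gcongr
        linarith
    _ ≤ shearSeminormSq β₀ β₁ κ s t := le_shearSeminormSq β₀ β₁ κ s hκ ht0

end shearSeminormSqAsymptotics

/-- For `s ≥ 1`, the `H^s` seminorm of `γ_t` on the unit square behaves
like `t^{1/2 − s}` as `t → 0⁺`: there are `c, C > 0` and `t₀ ∈ (0,1]` with
`c t^{1/2−s} ≤ (Σ_{a+b=s} Σ_{i=1,2} ‖∂₁^a ∂₂^b (γ_t)_i‖²_{L²((0,1)²)})^{1/2} ≤ C t^{1/2−s}`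
for all `t ∈ (0, t₀)`. -/
theorem stmt_9 (β₀ β₁ κ : ℝ) (hβ₀ : 0 < β₀) (hβ₁ : 0 < β₁) (hκ : 0 < κ)
    (s : ℕ) (hs : 1 ≤ s) :
    ∃ c C t₀ : ℝ, 0 < c ∧ 0 < C ∧ 0 < t₀ ∧ t₀ ≤ 1 ∧
      ∀ t : ℝ, 0 < t → t < t₀ →
        c * t ^ ((1 : ℝ) / 2 - (s : ℝ)) ≤
          Real.sqrt (∑ a ∈ Finset.range (s + 1),
            ((∫ x in usq, (pd1^[a] (pd2^[s - a] (gam1 β₀ β₁ κ t)) x) ^ 2)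
              + (∫ x in usq, (pd1^[a] (pd2^[s - a] (gam2 β₀ β₁ κ t)) x) ^ 2))) ∧
        Real.sqrt (∑ a ∈ Finset.range (s + 1),
            ((∫ x in usq, (pd1^[a] (pd2^[s - a] (gam1 β₀ β₁ κ t)) x) ^ 2)
              + (∫ x in usq, (pd1^[a] (pd2^[s - a] (gam2 β₀ β₁ κ t)) x) ^ 2)))
          ≤ C * t ^ ((1 : ℝ) / 2 - (s : ℝ)) := by
  have hΛ : 0 < β₀ + β₁ := add_pos hβ₀ hβ₁
  have ht₀ : 1 / (32 * (π ^ 6 * (π ^ 2) ^ s)) ≤ 1 := by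
    rw [div_le_one (by positivity)]; linarith [one_le_pi_pow_six_mul s]
  refine ⟨(β₀ + β₁) / 2, √(8 * (s + 1) * (β₀ + β₁) ^ 2 * (1 + 2 * (π ^ 6 * (π ^ 2) ^ s))),
    1 / (32 * (π ^ 6 * (π ^ 2) ^ s)), by positivity, by positivity, by positivity, ht₀,
    fun t ht0 ht => ?_⟩
  have hlow := le_shearSeminormSq_of_lt β₀ β₁ κ hκ.ne' ht0 ht hs
  have hup := shearSeminormSq_le_of_le_one β₀ β₁ κ hκ.ne' ht0 (ht.le.trans ht₀) hs
  rw [inv_sq_pow_div_inv_eq_sq_rpow ht0] at hlow hup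
  constructor
  · exact Real.le_sqrt_of_sq_le ((le_of_eq (by ring)).trans hlow)
  · rw [Real.sqrt_le_left (by positivity), mul_pow, Real.sq_sqrt (by positivity)]
    exact hup

end
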